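/- arXiv:2410.18006 — 2 statements merged into one kernel-verified Lean document; each statement's English description precedes it below -/
import Mathlib

section
/- Let ν ∈ P(ℝ^d) be 4-sub-Weibull with parameter σ², i.e., ∫ e^{‖x‖⁴/(2σ²)} dν ≤ 2. Then the centered measure ν̄ = (Id − E_ν[X])_♯ ν is 4-sub-Weibull with parameter σ̄² = 8σ²(2 + log 2)/log 2, i.e., ∫ e^{‖x‖⁴/(2σ̄²)} dν̄(x) ≤ 2. -/
/-!
Let `m` be the mean of `ν` and `t(x) = ‖x‖ ^ p / (2 s)`. Jensen's inequality and `t ≤ exp t` give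
`‖m‖ ^ p ≤ ∫ ‖x‖ ^ p dν ≤ 2 s ∫ exp t dν ≤ 4 s`. By `(a + b) ^ p ≤ 2 ^ (p - 1) (a ^ p + b ^ p)`,
the exponent at `x - m` for the parameter `2 ^ (p - 1) s / θ` is at most `θ (t(x) + 2)`,
and Jensen for the concave map `y ↦ y ^ θ` (`θ ≤ 1`) gives `∫ exp (θ t) dν ≤ 2 ^ θ`. Hence the
integral is at most `exp (2 θ) 2 ^ θ = exp (θ (2 + log 2))`, which is `2` for
`θ = log 2 / (2 + log 2)`.
-/

open MeasureTheory ENNReal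

section Jensen

variable {α : Type*} [MeasurableSpace α] {μ : Measure α} [IsProbabilityMeasure μ]
  {f : α → ℝ≥0∞}

theorem lintegral_rpow_le_rpow_lintegral (hf : AEMeasurable f μ) {θ : ℝ} (hθ₀ : 0 < θ)
    (hθ₁ : θ ≤ 1) : ∫⁻ a, f a ^ θ ∂μ ≤ (∫⁻ a, f a ∂μ) ^ θ := by
  have h := eLpNorm'_le_eLpNorm'_of_exponent_le hθ₀ hθ₁ μ hf.aestronglyMeasurable
  simp only [eLpNorm', enorm_eq_self, rpow_one, div_one, one_div] at h
  exact (rpow_inv_le_iff hθ₀).1 h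

theorem pow_lintegral_le_lintegral_pow (hf : AEMeasurable f μ) (p : ℕ) :
    (∫⁻ a, f a ∂μ) ^ p ≤ ∫⁻ a, f a ^ p ∂μ := by
  rcases p.eq_zero_or_pos with rfl | hp
  · simp
  have h := lintegral_rpow_le_rpow_lintegral (hf.pow_const p) (θ := (p : ℝ)⁻¹)
    (by positivity) (inv_le_one_of_one_le₀ (by exact_mod_cast hp))
  simp only [pow_rpow_inv_natCast hp.ne'] at h
  simpa [rpow_inv_natCast_pow hp.ne'] using pow_le_pow_left' h p

end Jensen

section SubWeibull

variable {E : Type*} [NormedAddCommGroup E]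

theorem norm_sub_pow_div_le (x m : E) {p : ℕ} {s θ : ℝ} (hs : 0 < s) (hθ : 0 < θ)
    (hm : ‖m‖ ^ p ≤ 4 * s) :
    ‖x - m‖ ^ p / (2 * (2 ^ (p - 1) * s / θ)) ≤ θ * (‖x‖ ^ p / (2 * s) + 2) := by
  have hsub : ‖x - m‖ ^ p ≤ 2 ^ (p - 1) * (‖x‖ ^ p + ‖m‖ ^ p) :=
    (pow_le_pow_left₀ (norm_nonneg _) (norm_sub_le x m) p).trans
      (add_pow_le (norm_nonneg x) (norm_nonneg m) p)
  calc ‖x - m‖ ^ p / (2 * (2 ^ (p - 1) * s / θ))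
      ≤ 2 ^ (p - 1) * (‖x‖ ^ p + ‖m‖ ^ p) / (2 * (2 ^ (p - 1) * s / θ)) := by gcongr
    _ = θ * (‖x‖ ^ p / (2 * s) + ‖m‖ ^ p / (2 * s)) := by field_simp
    _ ≤ θ * (‖x‖ ^ p / (2 * s) + 2) := by
        gcongr
        rw [div_le_iff₀ (by positivity)]
        linarith

variable [MeasurableSpace E]

/-- `s` plays the role of `σ²`. -/
def IsSubWeibull (p : ℕ) (ν : Measure E) (s : ℝ) : Prop :=
  ∫⁻ x, ENNReal.ofReal (Real.exp (‖x‖ ^ p / (2 * s))) ∂ν ≤ 2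

variable [NormedSpace ℝ E] [OpensMeasurableSpace E] {p : ℕ} {ν : Measure E} {s : ℝ}
  [IsProbabilityMeasure ν]

theorem IsSubWeibull.norm_integral_pow_le (h : IsSubWeibull p ν s) (hs : 0 < s) :
    ‖∫ x, x ∂ν‖ ^ p ≤ 4 * s := by
  have hmoment : ∀ x : E, ‖x‖ₑ ^ p ≤
      ENNReal.ofReal (2 * s) * ENNReal.ofReal (Real.exp (‖x‖ ^ p / (2 * s))) := by
    intro x
    rw [← ofReal_norm, ← ENNReal.ofReal_pow (norm_nonneg x), ← ENNReal.ofReal_mul (by positivity)]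
    refine ENNReal.ofReal_le_ofReal ?_
    have := Real.add_one_le_exp (‖x‖ ^ p / (2 * s))
    rw [← div_le_iff₀' (by positivity)]
    linarith
  rw [← ENNReal.ofReal_le_ofReal_iff (by positivity), ENNReal.ofReal_pow (norm_nonneg _),
    ofReal_norm]
  calc ‖∫ x, x ∂ν‖ₑ ^ p ≤ (∫⁻ x, ‖x‖ₑ ∂ν) ^ p := by
        gcongr; exact enorm_integral_le_lintegral_enorm _
    _ ≤ ∫⁻ x, ‖x‖ₑ ^ p ∂ν := pow_lintegral_le_lintegral_pow measurable_enorm.aemeasurable p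
    _ ≤ ∫⁻ x, ENNReal.ofReal (2 * s) * ENNReal.ofReal (Real.exp (‖x‖ ^ p / (2 * s))) ∂ν :=
        lintegral_mono hmoment
    _ = ENNReal.ofReal (2 * s) * ∫⁻ x, ENNReal.ofReal (Real.exp (‖x‖ ^ p / (2 * s))) ∂ν :=
        lintegral_const_mul' _ _ ofReal_ne_top
    _ ≤ ENNReal.ofReal (2 * s) * 2 := by gcongr; exact h
    _ = ENNReal.ofReal (4 * s) := by
        rw [← ENNReal.ofReal_ofNat 2, ← ENNReal.ofReal_mul (by positivity)]; ring_nf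

theorem IsSubWeibull.lintegral_exp_map_sub_integral_le (h : IsSubWeibull p ν s) (hs : 0 < s)
    {θ : ℝ} (hθ₀ : 0 < θ) (hθ₁ : θ ≤ 1) :
    ∫⁻ x, ENNReal.ofReal (Real.exp (‖x‖ ^ p / (2 * (2 ^ (p - 1) * s / θ))))
        ∂(ν.map (fun x => x - ∫ y, y ∂ν)) ≤
      ENNReal.ofReal (Real.exp (θ * (2 + Real.log 2))) := by
  set m := ∫ y, y ∂ν
  set g : E → ℝ≥0∞ := fun x => ENNReal.ofReal (Real.exp (‖x‖ ^ p / (2 * s)))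
  have hg : Measurable g := by unfold g; fun_prop
  have hpoint : ∀ x, ENNReal.ofReal (Real.exp (‖x - m‖ ^ p / (2 * (2 ^ (p - 1) * s / θ)))) ≤
      ENNReal.ofReal (Real.exp (2 * θ)) * g x ^ θ := by
    intro x
    rw [ENNReal.ofReal_rpow_of_nonneg (Real.exp_nonneg _) hθ₀.le, ← Real.exp_mul,
      ← ENNReal.ofReal_mul (Real.exp_nonneg _), ← Real.exp_add]
    gcongr
    linarith [norm_sub_pow_div_le x m hs hθ₀ (h.norm_integral_pow_le hs)]
  have htwo : (2 : ℝ≥0∞) ^ θ = ENNReal.ofReal (Real.exp (θ * Real.log 2)) := by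
    rw [mul_comm, Real.exp_mul, Real.exp_log two_pos,
      ← ENNReal.ofReal_rpow_of_nonneg zero_le_two hθ₀.le, ENNReal.ofReal_ofNat]
  calc ∫⁻ x, ENNReal.ofReal (Real.exp (‖x‖ ^ p / (2 * (2 ^ (p - 1) * s / θ))))
        ∂(ν.map (fun x => x - m))
      ≤ ∫⁻ x, ENNReal.ofReal (Real.exp (‖x - m‖ ^ p / (2 * (2 ^ (p - 1) * s / θ)))) ∂ν :=
        lintegral_map_le _ _
    _ ≤ ∫⁻ x, ENNReal.ofReal (Real.exp (2 * θ)) * g x ^ θ ∂ν := lintegral_mono hpoint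
    _ = ENNReal.ofReal (Real.exp (2 * θ)) * ∫⁻ x, g x ^ θ ∂ν :=
        lintegral_const_mul' _ _ ofReal_ne_top
    _ ≤ ENNReal.ofReal (Real.exp (2 * θ)) * (∫⁻ x, g x ∂ν) ^ θ := by
        gcongr; exact lintegral_rpow_le_rpow_lintegral hg.aemeasurable hθ₀ hθ₁
    _ ≤ ENNReal.ofReal (Real.exp (2 * θ)) * 2 ^ θ := by gcongr; exact h
    _ = ENNReal.ofReal (Real.exp (θ * (2 + Real.log 2))) := by
        rw [htwo, ← ENNReal.ofReal_mul (Real.exp_nonneg _), ← Real.exp_add]; ring_nf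

theorem IsSubWeibull.map_sub_integral (h : IsSubWeibull p ν s) (hs : 0 < s) :
    IsSubWeibull p (ν.map (fun x => x - ∫ y, y ∂ν))
      (2 ^ (p - 1) * s * (2 + Real.log 2) / Real.log 2) := by
  have hlog : 0 < Real.log 2 := Real.log_pos one_lt_two
  have hθ₁ : Real.log 2 / (2 + Real.log 2) ≤ 1 := by
    rw [div_le_one (by positivity)]; linarith
  have hθ := h.lintegral_exp_map_sub_integral_le hs (by positivity) hθ₁
  rwa [div_div_eq_mul_div, div_mul_cancel₀ _ (by positivity), Real.exp_log two_pos,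
    ENNReal.ofReal_ofNat] at hθ

end SubWeibull

/-- if `ν` is 4-sub-Weibull with parameter `σ²`, then its centering
`ν̄ = (Id − E_ν[X])_♯ ν` is 4-sub-Weibull with parameter `σ̄² = 8σ²(2 + log 2)/log 2`. -/
theorem centered_subWeibull {d : ℕ} (ν : Measure (EuclideanSpace ℝ (Fin d)))
    [IsProbabilityMeasure ν] (σ : ℝ) (hσ : 0 < σ)
    (h : ∫⁻ x, ENNReal.ofReal (Real.exp (‖x‖ ^ 4 / (2 * σ ^ 2))) ∂ν ≤ 2) :
    ∫⁻ x, ENNReal.ofReal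
        (Real.exp (‖x‖ ^ 4 / (2 * (8 * σ ^ 2 * (2 + Real.log 2) / Real.log 2))))
      ∂(ν.map (fun x => x - ∫ y, y ∂ν)) ≤ 2 := by
  have hν : IsSubWeibull 4 ν (σ ^ 2) := h
  simpa only [IsSubWeibull, show (2 : ℝ) ^ (4 - 1) = 8 by norm_num]
    using hν.map_sub_integral (by positivity)
end

section
/- Let μ₀ be a finitely supported probability measure on ℝ^d that is not a point mass, with centered version μ̄₀ and cross-correlation matrix Σ = ∫ z zᵀ dμ̄₀(z). Then for any two distinct points x, x' in the support of μ̄₀, (x − x')ᵀ Σ (x − x') > 0. -/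
open scoped RealInnerProductSpace

/-! Two distinct points `a ≠ b` cannot both be orthogonal to `a - b`, since the difference of
the two inner products is `‖a - b‖² ≠ 0`. Hence the direction `x k - x l` has a nonzero inner
product with some support point, and that point contributes a positive term to the
positively weighted sum of squares. -/

section

variable {E : Type*} [NormedAddCommGroup E] [InnerProductSpace ℝ E]

theorem inner_sub_ne_zero_or_of_ne {a b : E} (hab : a ≠ b) :
    ⟪a, a - b⟫ ≠ 0 ∨ ⟪b, a - b⟫ ≠ 0 := by
  by_contra! h
  have hself : ⟪a - b, a - b⟫ = 0 := by rw [inner_sub_left, h.1, h.2, sub_zero]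
  exact hab (sub_eq_zero.mp (inner_self_eq_zero.mp hself))

theorem weighted_sum_inner_sq_pos {ι : Type*} [Fintype ι] {x : ι → E} {p : ι → ℝ}
    (hp : ∀ i, 0 < p i) {v : E} (hv : ∃ i, ⟪x i, v⟫ ≠ 0) :
    0 < ∑ i, p i * ⟪x i, v⟫ ^ 2 := by
  obtain ⟨j, hj⟩ := hv
  exact Finset.sum_pos' (fun i _ => mul_nonneg (hp i).le (sq_nonneg _))
    ⟨j, Finset.mem_univ j, mul_pos (hp j) (sq_pos_of_ne_zero hj)⟩

end

theorem quadform_pos_on_support_general {d N : ℕ}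
    (x : Fin N → EuclideanSpace ℝ (Fin d)) (hinj : Function.Injective x)
    (p : Fin N → ℝ) (hp : ∀ i, 0 < p i) :
    ∀ k l : Fin N, k ≠ l → 0 < ∑ i, p i * ⟪x i, x k - x l⟫ ^ 2 := by
  intro k l hkl
  apply weighted_sum_inner_sq_pos hp
  rcases inner_sub_ne_zero_or_of_ne (hinj.ne hkl) with hk | hl
  · exact ⟨k, hk⟩
  · exact ⟨l, hl⟩

/-- let `μ̄₀` be the centering of a finitely supported probability measure
on `ℝ^d` that is not a point mass, represented by distinct support points `x i` with positive
weights `p i` summing to `1` and mean zero. With `Σ = ∑ᵢ pᵢ xᵢxᵢᵀ`, for any two distinct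
support points `x k ≠ x l` one has `(x k − x l)ᵀ Σ (x k − x l) > 0`, where
`vᵀ Σ v = ∑ᵢ pᵢ ⟪xᵢ, v⟫²`. -/
theorem quadform_pos_on_support {d N : ℕ} (hN : 2 ≤ N)
    (x : Fin N → EuclideanSpace ℝ (Fin d)) (hinj : Function.Injective x)
    (p : Fin N → ℝ) (hp : ∀ i, 0 < p i) (hsum : ∑ i, p i = 1)
    (hmean : ∑ i, p i • x i = 0) :
    ∀ k l : Fin N, k ≠ l → 0 < ∑ i, p i * ⟪x i, x k - x l⟫ ^ 2 :=
  quadform_pos_on_support_general x hinj p hp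
end
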